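/- Let k, l, m be positive integers, let f assign a real number f(i,j) to each pair 1 ≤ i < j ≤ m, and suppose f is (k+2, l+2)-free. Then for every pair 1 ≤ i < j ≤ m there exist x ∈ {1,…,k} and y ∈ {1,…,l} such that: (1) whenever an (x+1)-cup with respect to f ends with the pair (a, i) and a (y+1)-cap ends with the pair (b, i), one has f(a,i) > f(b,i) (this holds vacuously if either does not exist); and (2) there exist an (x+1)-cup ending with a pair (a, j) and a (y+1)-cap ending with a pair (b, j) such that f(a,j) ≤ f(b,j). (Consequently the words L_i and L_j of the paper are distinct for i ≠ j.) -/

import Mathlib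

/-- A `t`-cup with respect to `f` on indices `{1, …, m}`: a strictly increasing
sequence `q 0 < q 1 < ⋯ < q (t-1)` of indices, with non-decreasing values of `f`
on consecutive pairs. -/
def IsCup (m : ℕ) (f : ℕ → ℕ → ℝ) (t : ℕ) (q : ℕ → ℕ) : Prop :=
  (∀ i, i < t → 1 ≤ q i ∧ q i ≤ m) ∧
  (∀ i, i + 1 < t → q i < q (i + 1)) ∧
  (∀ i, i + 2 < t → f (q i) (q (i + 1)) ≤ f (q (i + 1)) (q (i + 2)))

/-- A `t`-cap with respect to `f` on indices `{1, …, m}`: a strictly increasing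
sequence of indices with non-increasing values of `f` on consecutive pairs. -/
def IsCap (m : ℕ) (f : ℕ → ℕ → ℝ) (t : ℕ) (q : ℕ → ℕ) : Prop :=
  (∀ i, i < t → 1 ≤ q i ∧ q i ≤ m) ∧
  (∀ i, i + 1 < t → q i < q (i + 1)) ∧
  (∀ i, i + 2 < t → f (q (i + 1)) (q (i + 2)) ≤ f (q i) (q (i + 1)))

/-- `f` is `(k, l)`-free: there is no `k`-cup and no `l`-cap with respect to `f`. -/
def IsFree (m : ℕ) (f : ℕ → ℕ → ℝ) (k l : ℕ) : Prop :=
  (¬ ∃ q, IsCup m f k q) ∧ (¬ ∃ q, IsCap m f l q)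

/-!
Let `x` be the largest `t` such that some `(t+1)`-cup ends with the pair `(i, j)`, and `y` the
same for caps; freeness bounds them by `k` and `l`, and the pair `(i, j)` alone shows they are at
least `1`. Then (2) holds with last values `f(i,j) = f(i,j)`. For (1), suppose an `(x+1)`-cup and a
`(y+1)`-cap end at `i` with last values `f(a,i) ≤ f(b,i)`. If `f(a,i) ≤ f(i,j)`, appending `j` to
the cup gives an `(x+2)`-cup ending with `(i, j)`; otherwise `f(i,j) < f(a,i) ≤ f(b,i)` and
appending `j` to the cap gives a `(y+2)`-cap ending with `(i, j)`. Both contradict maximality.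
-/

section CupsAndCaps

variable {m t : ℕ} {f : ℕ → ℕ → ℝ} {q : ℕ → ℕ}

lemma isCap_iff_isCup_neg : IsCap m f t q ↔ IsCup m (-f) t q := by
  simp only [IsCap, IsCup, Pi.neg_apply, neg_le_neg_iff]

lemma IsCup.mono {t' : ℕ} (h : IsCup m f t q) (h' : t' ≤ t) : IsCup m f t' q :=
  ⟨fun i hi => h.1 i (by omega), fun i hi => h.2.1 i (by omega),
    fun i hi => h.2.2 i (by omega)⟩

lemma isCup_two {a b : ℕ} (ha : 1 ≤ a) (hab : a < b) (hb : b ≤ m) :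
    IsCup m f 2 (fun n => if n = 0 then a else b) := by
  refine ⟨fun n hn => ?_, fun n hn => ?_, fun n hn => by omega⟩
  · dsimp only
    split_ifs <;> omega
  · obtain rfl : n = 0 := by omega
    simpa using hab

lemma IsCup.snoc {j : ℕ} (h : IsCup m f (t + 1) q) (hlt : q t < j) (hj : j ≤ m)
    (hval : f (q (t - 1)) (q t) ≤ f (q t) j) :
    IsCup m f (t + 2) (fun n => if n ≤ t then q n else j) := by
  obtain ⟨hrange, hinc, hcup⟩ := h
  refine ⟨fun n hn => ?_, fun n hn => ?_, fun n hn => ?_⟩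
  · dsimp only
    split_ifs
    · exact hrange n (by omega)
    · exact ⟨by have := (hrange t (by omega)).1; omega, hj⟩
  · by_cases hnt : n < t
    · simpa [hnt.le, Nat.succ_le_of_lt hnt] using hinc n (by omega)
    · obtain rfl : n = t := by omega
      simpa using hlt
  · by_cases hnt : n + 2 ≤ t
    · simpa [show n ≤ t by omega, show n + 1 ≤ t by omega, hnt] using hcup n (by omega)
    · obtain rfl : t = n + 1 := by omega
      simpa using hval

end CupsAndCaps

def CupEndsWithPair (m : ℕ) (f : ℕ → ℕ → ℝ) (t a b : ℕ) : Prop :=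
  ∃ q, IsCup m f (t + 1) q ∧ q (t - 1) = a ∧ q t = b

section EndsWithPair

variable {m t i j : ℕ} {f : ℕ → ℕ → ℝ}

lemma IsCup.cupEndsWithPair_snoc {q : ℕ → ℕ} (h : IsCup m f (t + 1) q) (hq : q t = i)
    (hij : i < j) (hj : j ≤ m) (hval : f (q (t - 1)) i ≤ f i j) :
    CupEndsWithPair m f (t + 1) i j :=
  ⟨_, h.snoc (hq ▸ hij) hj (hq ▸ hval), by simp [hq], by simp⟩

lemma exists_maximal_cupEndsWithPair {k : ℕ} (hf : ¬ ∃ q, IsCup m f (k + 2) q) (hi : 1 ≤ i)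
    (hij : i < j) (hj : j ≤ m) :
    ∃ x ∈ Finset.Icc 1 k, CupEndsWithPair m f x i j ∧ ¬ CupEndsWithPair m f (x + 1) i j := by
  classical
  have hone : CupEndsWithPair m f 1 i j := ⟨_, isCup_two hi hij hj, by simp, by simp⟩
  have hbound : ∀ t, CupEndsWithPair m f t i j → t ≤ k := by
    rintro t ⟨q, hq, -⟩
    by_contra! ht
    exact hf ⟨q, hq.mono (by omega)⟩
  have hk : 1 ≤ k := hbound 1 hone
  set P : ℕ → Prop := (CupEndsWithPair m f · i j)
  refine ⟨Nat.findGreatest P k, Finset.mem_Icc.2 ⟨Nat.le_findGreatest hk hone,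
    Nat.findGreatest_le k⟩, Nat.findGreatest_spec (P := P) hk hone, fun hsucc => ?_⟩
  exact Nat.findGreatest_is_greatest (Nat.lt_succ_self _) (hbound _ hsucc) hsucc

lemma lt_of_not_cupEndsWithPair_succ {x y : ℕ} {qc qd : ℕ → ℕ}
    (hx : ¬ CupEndsWithPair m f (x + 1) i j) (hy : ¬ CupEndsWithPair m (-f) (y + 1) i j)
    (hij : i < j) (hj : j ≤ m) (hc : IsCup m f (x + 1) qc) (hci : qc x = i)
    (hd : IsCap m f (y + 1) qd) (hdi : qd y = i) :
    f (qd (y - 1)) i < f (qc (x - 1)) i := by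
  by_contra! hle
  rcases le_or_gt (f (qc (x - 1)) i) (f i j) with hcup | hcap
  · exact hx (hc.cupEndsWithPair_snoc hci hij hj hcup)
  · exact hy ((isCap_iff_isCup_neg.1 hd).cupEndsWithPair_snoc hdi hij hj
      (neg_le_neg (hcap.le.trans hle)))

end EndsWithPair

theorem L_words_distinct_general (k l m : ℕ)
    (f : ℕ → ℕ → ℝ) (hf : IsFree m f (k + 2) (l + 2)) :
    ∀ i j : ℕ, 1 ≤ i → i < j → j ≤ m →
      ∃ x ∈ Finset.Icc 1 k, ∃ y ∈ Finset.Icc 1 l,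
        -- (1) every (x+1)-cup ending at i beats every (y+1)-cap ending at i
        (∀ qc qd, IsCup m f (x + 1) qc → qc x = i →
          IsCap m f (y + 1) qd → qd y = i →
          f (qd (y - 1)) i < f (qc (x - 1)) i) ∧
        -- (2) some (x+1)-cup and some (y+1)-cap ending at j with f(a,j) ≤ f(b,j)
        (∃ qc qd, IsCup m f (x + 1) qc ∧ qc x = j ∧
          IsCap m f (y + 1) qd ∧ qd y = j ∧
          f (qc (x - 1)) j ≤ f (qd (y - 1)) j) := by
  intro i j hi hij hj
  have hcap : ¬ ∃ q, IsCup m (-f) (l + 2) q := by simpa only [isCap_iff_isCup_neg] using hf.2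
  obtain ⟨x, hxk, ⟨qc, hqc, hqci, hqcj⟩, hx⟩ := exists_maximal_cupEndsWithPair hf.1 hi hij hj
  obtain ⟨y, hyl, ⟨qd, hqd, hqdi, hqdj⟩, hy⟩ := exists_maximal_cupEndsWithPair hcap hi hij hj
  refine ⟨x, hxk, y, hyl, fun _ _ hc hci hd hdi =>
      lt_of_not_cupEndsWithPair_succ hx hy hij hj hc hci hd hdi,
    qc, qd, hqc, hqcj, isCap_iff_isCup_neg.2 hqd, hqdj, ?_⟩
  rw [hqci, hqdi]

/-- For a `(k+2, l+2)`-free `f` and `i < j`, there exist `x ∈ [k]`, `y ∈ [l]`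
such that every `(x+1)`-cup ending at `i` has a strictly larger last value than
every `(y+1)`-cap ending at `i`, while some `(x+1)`-cup and `(y+1)`-cap ending
at `j` compare the other way. (Hence the words `L_i` are pairwise distinct.) -/
theorem L_words_distinct (k l m : ℕ) (hk : 1 ≤ k) (hl : 1 ≤ l) (hm : 1 ≤ m)
    (f : ℕ → ℕ → ℝ) (hf : IsFree m f (k + 2) (l + 2)) :
    ∀ i j : ℕ, 1 ≤ i → i < j → j ≤ m →
      ∃ x ∈ Finset.Icc 1 k, ∃ y ∈ Finset.Icc 1 l,
        -- (1) every (x+1)-cup ending at i beats every (y+1)-cap ending at i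
        (∀ qc qd, IsCup m f (x + 1) qc → qc x = i →
          IsCap m f (y + 1) qd → qd y = i →
          f (qd (y - 1)) i < f (qc (x - 1)) i) ∧
        -- (2) some (x+1)-cup and some (y+1)-cap ending at j with f(a,j) ≤ f(b,j)
        (∃ qc qd, IsCup m f (x + 1) qc ∧ qc x = j ∧
          IsCap m f (y + 1) qd ∧ qd y = j ∧
          f (qc (x - 1)) j ≤ f (qd (y - 1)) j) :=
  L_words_distinct_general k l m f hf
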